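/- Let G be a complete multipartite graph K_{n₁,…,n_k} with k ≥ 2, n > k, G not a star, v a vertex in a largest colour class, and (H,(Q₁,Q₂,Q₃)) a good labelling. If v ∉ Q₃, then the single vertex in Q₃ lies in a different colour class from v. -/

import Mathlib

open SimpleGraph

/-- A tree decomposition of a graph `G`. -/
structure TreeDecomp {V : Type} (G : SimpleGraph V) where
  ι : Type
  T : SimpleGraph ι
  connected : T.Connected
  acyclic : T.IsAcyclic
  bag : ι → Finset V
  mem_bag : ∀ v : V, ∃ i, v ∈ bag i
  adj_bag : ∀ u v : V, G.Adj u v → ∃ i, u ∈ bag i ∧ v ∈ bag i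
  coherent : ∀ v : V, (T.induce {i | v ∈ bag i}).Connected

/-- `G` has a tree decomposition of width at most `w`. -/
def HasTreewidthLE {V : Type} (G : SimpleGraph V) (w : ℕ) : Prop :=
  ∃ D : TreeDecomp G, ∀ i, (D.bag i).card ≤ w + 1

/-- The treewidth of `G`. -/
noncomputable def treewidth {V : Type} (G : SimpleGraph V) : ℕ :=
  sInf {w | HasTreewidthLE G w}

/-- `G` has a path decomposition of width at most `w`: bags indexed by `Fin m`,
bags containing a fixed vertex are consecutive. -/
def HasPathwidthLE {V : Type} (G : SimpleGraph V) (w : ℕ) : Prop :=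
  ∃ (m : ℕ) (bag : Fin m → Finset V),
    (∀ v : V, ∃ i, v ∈ bag i) ∧
    (∀ u v : V, G.Adj u v → ∃ i, u ∈ bag i ∧ v ∈ bag i) ∧
    (∀ (v : V) (i j l : Fin m), i ≤ j → j ≤ l → v ∈ bag i → v ∈ bag l → v ∈ bag j) ∧
    (∀ i, (bag i).card ≤ w + 1)

/-- The pathwidth of `G`. -/
noncomputable def pathwidth {V : Type} (G : SimpleGraph V) : ℕ :=
  sInf {w | HasPathwidthLE G w}

/-- A bramble of a graph `H`: a collection of (vertex sets of) connected subgraphs,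
pairwise touching. -/
def IsBramble {W : Type} (H : SimpleGraph W) (B : Set (Set W)) : Prop :=
  (∀ X ∈ B, (H.induce X).Connected) ∧
  (∀ X ∈ B, ∀ Y ∈ B, (X ∩ Y).Nonempty ∨ ∃ x ∈ X, ∃ y ∈ Y, H.Adj x y)

/-- A vertex set hitting every element of a bramble. -/
def IsBrambleHitting {W : Type} (B : Set (Set W)) (S : Finset W) : Prop :=
  ∀ X ∈ B, ∃ x ∈ S, x ∈ X

/-- The order of a bramble: minimum size of a hitting set. -/
noncomputable def brambleOrder {W : Type} (B : Set (Set W)) : ℕ :=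
  sInf {m | ∃ S : Finset W, IsBrambleHitting B S ∧ S.card = m}

/-- The bramble number of `H`. -/
noncomputable def brambleNumber {W : Type} (H : SimpleGraph W) : ℕ :=
  sSup {m | ∃ B : Set (Set W), IsBramble H B ∧ brambleOrder B = m}

/-- A line-bramble of `G`. -/
def IsLineBramble {V : Type} (G : SimpleGraph V) (B : Set G.Subgraph) : Prop :=
  (∀ X ∈ B, X.Connected ∧ 2 ≤ X.verts.ncard) ∧
  (∀ X ∈ B, ∀ Y ∈ B, (X.verts ∩ Y.verts).Nonempty)

/-- An edge set hitting every member of a line-bramble. -/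
def IsLBHitting {V : Type} (G : SimpleGraph V) (B : Set G.Subgraph)
    (F : Finset (Sym2 V)) : Prop :=
  ↑F ⊆ G.edgeSet ∧ ∀ X ∈ B, ∃ e ∈ F, e ∈ X.edgeSet

/-- `H` is a minimum hitting set of the line-bramble `B`. -/
def IsMinLBHitting {V : Type} (G : SimpleGraph V) (B : Set G.Subgraph)
    (H : Finset (Sym2 V)) : Prop :=
  IsLBHitting G B H ∧ ∀ F, IsLBHitting G B F → H.card ≤ F.card

/-- The order of a line-bramble: minimum size of a hitting edge set. -/
noncomputable def lineBrambleOrder {V : Type} (G : SimpleGraph V) (B : Set G.Subgraph) : ℕ :=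
  sInf {m | ∃ F : Finset (Sym2 V), IsLBHitting G B F ∧ F.card = m}

/-- The canonical line-bramble for `v` of `G`. -/
def canonicalLineBramble {V : Type} (G : SimpleGraph V) (v : V) : Set G.Subgraph :=
  {X | X.Connected ∧
    (Nat.card V < 2 * X.verts.ncard ∨ (2 * X.verts.ncard = Nat.card V ∧ v ∈ X.verts))}

/-- The support of the component of `w` in `G - H`. -/
def compSupp {V : Type} (G : SimpleGraph V) (H : Finset (Sym2 V)) (w : V) : Set V :=
  ((G.deleteEdges ↑H).connectedComponentMk w).supp

/-- `(H, Q)` is a labelling: `H` is a hitting set of the line-bramble `B`, and `Q`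
enumerates the components of `G - H` without repetition. -/
def IsLabelling {V : Type} (G : SimpleGraph V) (B : Set G.Subgraph)
    (H : Finset (Sym2 V)) {p : ℕ} (Q : Fin p → Set V) : Prop :=
  IsLBHitting G B H ∧ Function.Injective Q ∧
  (∀ i, ∃ w : V, Q i = compSupp G H w) ∧
  (∀ w : V, ∃ i, Q i = compSupp G H w)

/-- A good labelling: `|H|` minimum; then the sequence `|Q 0|, |Q 1|, …` lexicographically
maximum; then `v` in the component of highest possible index. -/
def IsGoodLabelling {V : Type} (G : SimpleGraph V) (B : Set G.Subgraph) (v : V)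
    (H : Finset (Sym2 V)) {p : ℕ} (Q : Fin p → Set V) : Prop :=
  IsLabelling G B H Q ∧
  (∀ F, IsLBHitting G B F → H.card ≤ F.card) ∧
  (∀ (H' : Finset (Sym2 V)) (p' : ℕ) (Q' : Fin p' → Set V),
      IsLabelling G B H' Q' → H'.card = H.card →
      ¬ List.Lex (· < ·) (List.ofFn fun i => (Q i).ncard) (List.ofFn fun i => (Q' i).ncard)) ∧
  (∀ (H' : Finset (Sym2 V)) (p' : ℕ) (Q' : Fin p' → Set V),
      IsLabelling G B H' Q' → H'.card = H.card →
      (List.ofFn fun i => (Q i).ncard) = (List.ofFn fun i => (Q' i).ncard) →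
      ∀ (i : Fin p) (j : Fin p'), v ∈ Q i → v ∈ Q' j → (j : ℕ) ≤ (i : ℕ))


section AuxHelpers

variable {V : Type}

lemma mem_compSupp {G : SimpleGraph V} {H : Finset (Sym2 V)} {a w : V} :
    a ∈ compSupp G H w ↔ (G.deleteEdges ↑H).Reachable a w := by
  simp [compSupp, ConnectedComponent.mem_supp_iff, ConnectedComponent.eq]

lemma self_mem_compSupp (G : SimpleGraph V) (H : Finset (Sym2 V)) (w : V) :
    w ∈ compSupp G H w := mem_compSupp.mpr (Reachable.refl w)

lemma compSupp_eq_of_mem {G : SimpleGraph V} {H : Finset (Sym2 V)} {a w : V}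
    (h : a ∈ compSupp G H w) : compSupp G H a = compSupp G H w := by
  ext b
  rw [mem_compSupp, mem_compSupp]
  exact ⟨fun hb => hb.trans (mem_compSupp.mp h), fun hb => hb.trans (mem_compSupp.mp h).symm⟩

/-- The component of `w` in `G - H` as a subgraph of `G`. -/
def compSub (G : SimpleGraph V) (H : Finset (Sym2 V)) (w : V) : G.Subgraph where
  verts := compSupp G H w
  Adj a b := (G.deleteEdges ↑H).Adj a b ∧ a ∈ compSupp G H w ∧ b ∈ compSupp G H w
  adj_sub h := (G.deleteEdges_le ↑H) h.1
  edge_vert h := h.2.1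
  symm := ⟨fun a b h => ⟨h.1.symm, h.2.2, h.2.1⟩⟩

lemma compSub_connected (G : SimpleGraph V) (H : Finset (Sym2 V)) (w : V) :
    (compSub G H w).Connected := by
  have key : ∀ (u a : V) (p : (G.deleteEdges ↑H).Walk u a) (hu : u ∈ compSupp G H w)
      (ha : a ∈ compSupp G H w),
      (compSub G H w).coe.Reachable ⟨u, hu⟩ ⟨a, ha⟩ := by
    intro u a p
    induction p with
    | nil => intro hu ha; exact Reachable.refl _
    | @cons u y a h p ih =>
      intro hu ha
      have hy : y ∈ compSupp G H w :=
        mem_compSupp.mpr (h.symm.reachable.trans (mem_compSupp.mp hu))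
      have hadj : (compSub G H w).coe.Adj ⟨u, hu⟩ ⟨y, hy⟩ := by
        show (compSub G H w).Adj u y
        exact ⟨h, hu, hy⟩
      exact hadj.reachable.trans (ih hy ha)
  rw [Subgraph.connected_iff', connected_iff_exists_forall_reachable]
  refine ⟨⟨w, self_mem_compSupp G H w⟩, ?_⟩
  rintro ⟨a, ha⟩
  obtain ⟨p⟩ := (mem_compSupp.mp ha).symm
  exact key w a p (self_mem_compSupp G H w) ha

lemma compSub_edge_not_mem (G : SimpleGraph V) (H : Finset (Sym2 V)) (w : V) :
    ∀ e ∈ H, e ∉ (compSub G H w).edgeSet := by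
  intro e heH
  induction e with
  | _ a b =>
    intro hab
    rw [Subgraph.mem_edgeSet] at hab
    exact (deleteEdges_adj.mp hab.1).2 heH

lemma verts_subset_comp {G : SimpleGraph V} {H : Finset (Sym2 V)} (X : G.Subgraph)
    (hc : X.Connected) (hd : ∀ e ∈ H, e ∉ X.edgeSet) :
    ∃ w, X.verts ⊆ compSupp G H w := by
  obtain ⟨w, hw⟩ := hc.nonempty
  refine ⟨w, fun a ha => ?_⟩
  have hr : X.coe.Reachable ⟨a, ha⟩ ⟨w, hw⟩ := hc.preconnected ⟨a, ha⟩ ⟨w, hw⟩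
  let f : X.coe →g (G.deleteEdges ↑H) :=
    { toFun := Subtype.val
      map_rel' := by
        intro p q hpq
        have hX : X.Adj p.1 q.1 := hpq
        refine deleteEdges_adj.mpr ⟨X.adj_sub hX, fun hmem => ?_⟩
        exact hd _ hmem (Subgraph.mem_edgeSet.mpr hX) }
  exact mem_compSupp.mpr (hr.map f)

lemma subgraph_map_connected {W : Type} {G : SimpleGraph V} {G' : SimpleGraph W}
    (f : G →g G') {X : G.Subgraph} (h : X.Connected) : (X.map f).Connected := by
  let g : X.coe →g (X.map f).coe :=
    { toFun := fun a => ⟨f a.1, ⟨a.1, a.2, rfl⟩⟩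
      map_rel' := by
        intro p q hpq
        have hX : X.Adj p.1 q.1 := hpq
        show (X.map f).Adj (f p.1) (f q.1)
        exact ⟨p.1, q.1, hX, rfl, rfl⟩ }
  obtain ⟨u0, hu0⟩ := h.nonempty
  rw [Subgraph.connected_iff', connected_iff_exists_forall_reachable]
  refine ⟨g ⟨u0, hu0⟩, ?_⟩
  rintro ⟨w, hw⟩
  obtain ⟨a, ha, rfl⟩ := hw
  exact Reachable.map g (h.preconnected ⟨u0, hu0⟩ ⟨a, ha⟩)

lemma list_ofFn_three (f : Fin 3 → ℕ) : List.ofFn f = [f 0, f 1, f 2] := by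
  simp [List.ofFn_succ]


lemma edgeSet_map_subset {W : Type} {G : SimpleGraph V} {G' : SimpleGraph W}
    (f : G →g G') (X : G.Subgraph) :
    (X.map f).edgeSet ⊆ Sym2.map f '' X.edgeSet := by
  intro e
  induction e with
  | _ c d =>
    intro he
    rw [Subgraph.mem_edgeSet, Subgraph.map_adj] at he
    obtain ⟨a, b, hab, ha, hb⟩ := he
    exact ⟨s(a, b), Subgraph.mem_edgeSet.mpr hab, by rw [Sym2.map_pair_eq, ha, hb]⟩

end AuxHelpers

/-- the singleton component's vertex is in a different colour class
from `v` whenever `v ∉ Q₃`. -/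
theorem multipartite_singleton_colour (k : ℕ) (hk : 2 ≤ k) (n : Fin k → ℕ) (hpos : ∀ i, 1 ≤ n i)
    (hnk : k < ∑ i, n i) (hstar : ¬ (k = 2 ∧ ∃ i, n i = 1))
    (v : Σ i : Fin k, Fin (n i)) (hv : ∀ i, n i ≤ n v.1)
    (H : Finset (Sym2 (Σ i : Fin k, Fin (n i))))
    (Q : Fin 3 → Set (Σ i : Fin k, Fin (n i)))
    (hgood : IsGoodLabelling (completeMultipartiteGraph (fun i : Fin k => Fin (n i)))
      (canonicalLineBramble (completeMultipartiteGraph (fun i : Fin k => Fin (n i))) v) v H Q)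
    (hv3 : v ∉ Q 2) :
    ∀ x ∈ Q 2, x.1 ≠ v.1 := by
  classical
  intro x hx hcol
  obtain ⟨hlab, hmin, hlex, hlast⟩ := hgood
  obtain ⟨⟨hHedge, hHhits⟩, hinj, hcomp, hsurj⟩ := hlab
  set G := completeMultipartiteGraph (fun i : Fin k => Fin (n i)) with hGdef
  have hGadj : ∀ a b : (Σ i : Fin k, Fin (n i)), G.Adj a b ↔ a.1 ≠ b.1 := fun a b => by
    simp [hGdef]
  have hne : x ≠ v := fun h => hv3 (h ▸ hx)
  set σ := Equiv.swap v x with hσdef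
  have hσσ : ∀ a, σ (σ a) = a := fun a => Equiv.swap_apply_self v x a
  have hσfst : ∀ a, (σ a).1 = a.1 := by
    intro a
    rcases eq_or_ne a v with rfl | hav
    · rw [hσdef, Equiv.swap_apply_left]; exact hcol
    rcases eq_or_ne a x with rfl | hax
    · rw [hσdef, Equiv.swap_apply_right]; exact hcol.symm
    · rw [hσdef, Equiv.swap_apply_of_ne_of_ne hav hax]
  have hadjσ : ∀ a b, G.Adj (σ a) (σ b) ↔ G.Adj a b := by
    intro a b; rw [hGadj, hGadj, hσfst, hσfst]
  have hmapσ : ∀ e, Sym2.map σ (Sym2.map σ e) = e := by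
    intro e
    rw [Sym2.map_map]
    have h : ⇑σ ∘ ⇑σ = id := funext hσσ
    rw [h, Sym2.map_id, id_eq]
  have hQne : ∀ i, (Q i).Nonempty := by
    intro i; obtain ⟨w, hw⟩ := hcomp i; exact ⟨w, hw ▸ self_mem_compSupp G H w⟩
  have hcover : ∀ a, ∃ i, a ∈ Q i := by
    intro a; obtain ⟨i, hi⟩ := hsurj a; exact ⟨i, hi ▸ self_mem_compSupp G H a⟩
  have hQeq : ∀ (i : Fin 3) a, a ∈ Q i → Q i = compSupp G H a := by
    intro i a ha
    obtain ⟨w, hw⟩ := hcomp i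
    rw [hw] at ha ⊢
    exact (compSupp_eq_of_mem ha).symm
  have hdisj : ∀ i j : Fin 3, i ≠ j → Disjoint (Q i) (Q j) := by
    intro i j hij
    rw [Set.disjoint_left]
    intro a hai haj
    exact hij (hinj ((hQeq i a hai).trans (hQeq j a haj).symm))
  have hsum : (Q 0).ncard + (Q 1).ncard + (Q 2).ncard
      = Nat.card (Σ i : Fin k, Fin (n i)) := by
    have hunion : Q 0 ∪ Q 1 ∪ Q 2 = Set.univ := by
      ext a
      simp only [Set.mem_union, Set.mem_univ, iff_true]
      obtain ⟨i, hi⟩ := hcover a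
      fin_cases i
      · exact Or.inl (Or.inl hi)
      · exact Or.inl (Or.inr hi)
      · exact Or.inr hi
    have h01 : Disjoint (Q 0) (Q 1) := hdisj 0 1 (by decide)
    have h02 : Disjoint (Q 0) (Q 2) := hdisj 0 2 (by decide)
    have h12 : Disjoint (Q 1) (Q 2) := hdisj 1 2 (by decide)
    rw [← Set.ncard_univ, ← hunion,
      Set.ncard_union_eq (Set.disjoint_union_left.mpr ⟨h02, h12⟩) (Set.toFinite _)
        (Set.toFinite _),
      Set.ncard_union_eq h01 (Set.toFinite _) (Set.toFinite _)]
  have hcompsize : ∀ w, 2 * (compSupp G H w).ncard ≤ Nat.card (Σ i : Fin k, Fin (n i))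
      ∧ (2 * (compSupp G H w).ncard = Nat.card (Σ i : Fin k, Fin (n i))
        → v ∉ compSupp G H w) := by
    intro w
    have hnotB : compSub G H w ∉ canonicalLineBramble G v := by
      intro hBmem
      obtain ⟨e, heH, heX⟩ := hHhits _ hBmem
      exact compSub_edge_not_mem G H w e heH heX
    constructor
    · by_contra hcon
      push_neg at hcon
      exact hnotB ⟨compSub_connected G H w, Or.inl hcon⟩
    · intro heq hvmem
      exact hnotB ⟨compSub_connected G H w, Or.inr ⟨heq, hvmem⟩⟩
  have hpermlab : ∀ π : Equiv.Perm (Fin 3),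
      IsLabelling G (canonicalLineBramble G v) H (Q ∘ π) :=
    fun π => ⟨⟨hHedge, hHhits⟩, hinj.comp π.injective, fun i => hcomp (π i),
      fun w => by obtain ⟨i, hi⟩ := hsurj w; exact ⟨π.symm i, by simpa using hi⟩⟩
  have hca : (Q 2).ncard ≤ (Q 0).ncard := by
    by_contra hcon
    push_neg at hcon
    refine hlex H 3 (Q ∘ Equiv.swap 0 2) (hpermlab _) rfl ?_
    rw [list_ofFn_three, list_ofFn_three]
    simp only [Function.comp_apply]
    rw [show (Equiv.swap (0 : Fin 3) 2) 0 = 2 from Equiv.swap_apply_left 0 2,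
      show (Equiv.swap (0 : Fin 3) 2) 1 = 1 from
        Equiv.swap_apply_of_ne_of_ne (by decide) (by decide),
      show (Equiv.swap (0 : Fin 3) 2) 2 = 0 from Equiv.swap_apply_right 0 2]
    exact List.Lex.rel hcon
  have hcb : (Q 2).ncard ≤ (Q 1).ncard := by
    by_contra hcon
    push_neg at hcon
    refine hlex H 3 (Q ∘ Equiv.swap 1 2) (hpermlab _) rfl ?_
    rw [list_ofFn_three, list_ofFn_three]
    simp only [Function.comp_apply]
    rw [show (Equiv.swap (1 : Fin 3) 2) 0 = 0 from
        Equiv.swap_apply_of_ne_of_ne (by decide) (by decide),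
      show (Equiv.swap (1 : Fin 3) 2) 1 = 2 from Equiv.swap_apply_left 1 2,
      show (Equiv.swap (1 : Fin 3) 2) 2 = 1 from Equiv.swap_apply_right 1 2]
    exact List.Lex.cons (List.Lex.rel hcon)
  have hhitx : ∀ X ∈ canonicalLineBramble G x, ∃ e ∈ H, e ∈ X.edgeSet := by
    intro X hX
    by_contra hcon
    push_neg at hcon
    obtain ⟨hXc, hXsize⟩ := hX
    obtain ⟨w, hsub⟩ := verts_subset_comp X hXc hcon
    have h1 : X.verts.ncard ≤ (compSupp G H w).ncard :=
      Set.ncard_le_ncard hsub (Set.toFinite _)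
    have h2 := (hcompsize w).1
    rcases hXsize with hgt | ⟨heq, hxX⟩
    · omega
    · have hvertseq : X.verts = compSupp G H w :=
        Set.eq_of_subset_of_ncard_le hsub (by omega) (Set.toFinite _)
      have hxw : x ∈ compSupp G H w := hvertseq ▸ hxX
      have hQ2 : Q 2 = compSupp G H w := (hQeq 2 x hx).trans (compSupp_eq_of_mem hxw)
      have hc2 : 2 * (Q 2).ncard = Nat.card (Σ i : Fin k, Fin (n i)) := by
        rw [hQ2]; omega
      have hb1 : 1 ≤ (Q 1).ncard := (Set.ncard_pos (Set.toFinite _)).mpr (hQne 1)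
      omega
  set H' := H.image (Sym2.map σ) with hH'def
  have hmemH' : ∀ e, e ∈ H' ↔ Sym2.map σ e ∈ H := by
    intro e
    rw [hH'def]
    simp only [Finset.mem_image]
    constructor
    · rintro ⟨a, haH, rfl⟩; rwa [hmapσ]
    · intro h; exact ⟨_, h, hmapσ e⟩
  have hcardH' : H'.card = H.card :=
    Finset.card_image_of_injective _ (Sym2.map.injective σ.injective)
  let hdelIso : (G.deleteEdges ↑H) ≃g (G.deleteEdges ↑H') :=
    { toEquiv := σ
      map_rel_iff' := by
        intro a b
        show (G.deleteEdges ↑H').Adj (σ a) (σ b) ↔ (G.deleteEdges ↑H).Adj a b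
        rw [deleteEdges_adj, deleteEdges_adj, hadjσ]
        have h : s(σ a, σ b) ∈ (↑H' : Set (Sym2 (Σ i : Fin k, Fin (n i))))
            ↔ s(a, b) ∈ (↑H : Set (Sym2 (Σ i : Fin k, Fin (n i)))) := by
          rw [← Sym2.map_pair_eq, Finset.mem_coe, Finset.mem_coe, hmemH', hmapσ]
        rw [h] }
  have hreachσ : ∀ a w, (G.deleteEdges ↑H').Reachable a (σ w)
      ↔ (G.deleteEdges ↑H).Reachable (σ a) w := by
    intro a w
    have key := @Iso.reachable_iff _ _ _ _ hdelIso (σ a) w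
    rw [show hdelIso (σ a) = a from hσσ a, show hdelIso w = σ w from rfl] at key
    exact key
  have hsuppσ : ∀ w, compSupp G H' (σ w) = σ '' compSupp G H w := by
    intro w
    ext a
    rw [mem_compSupp, hreachσ]
    constructor
    · intro h; exact ⟨σ a, mem_compSupp.mpr h, hσσ a⟩
    · rintro ⟨b, hb, rfl⟩; rw [hσσ b]; exact mem_compSupp.mp hb
  set Q' := fun i : Fin 3 => σ '' Q i with hQ'def
  have hedgeσ : ∀ e ∈ G.edgeSet, Sym2.map σ e ∈ G.edgeSet := by
    intro e
    induction e with
    | _ a b =>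
      intro he
      rw [mem_edgeSet] at he
      rw [Sym2.map_pair_eq, mem_edgeSet, hadjσ]
      exact he
  let σhom : G →g G := { toFun := σ, map_rel' := fun h => (hadjσ _ _).mpr h }
  have hlab' : IsLabelling G (canonicalLineBramble G v) H' Q' := by
    refine ⟨⟨?_, ?_⟩, ?_, ?_, ?_⟩
    · intro e he
      rw [Finset.mem_coe, hmemH'] at he
      have h := hedgeσ _ (hHedge (Finset.mem_coe.mpr he))
      rwa [hmapσ] at h
    · intro X hX
      have hY : X.map σhom ∈ canonicalLineBramble G x := by
        refine ⟨subgraph_map_connected σhom hX.1, ?_⟩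
        have hverts : (X.map σhom).verts = σ '' X.verts := rfl
        have hn : (X.map σhom).verts.ncard = X.verts.ncard := by
          rw [hverts]; exact Set.ncard_image_of_injective _ σ.injective
        rcases hX.2 with h | ⟨h1, h2⟩
        · exact Or.inl (by rw [hn]; exact h)
        · refine Or.inr ⟨by rw [hn]; exact h1, ?_⟩
          rw [hverts]
          exact ⟨v, h2, Equiv.swap_apply_left v x⟩
      obtain ⟨e, heH, heY⟩ := hhitx _ hY
      obtain ⟨e0, he0X, rfl⟩ := edgeSet_map_subset σhom X heY
      refine ⟨Sym2.map σ (Sym2.map σhom e0), (hmemH' _).mpr ?_, ?_⟩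
      · have h : Sym2.map σ (Sym2.map σ (Sym2.map σhom e0)) = Sym2.map σhom e0 :=
          hmapσ _
        rwa [h]
      · have h : Sym2.map σ (Sym2.map σhom e0) = e0 := hmapσ e0
        rwa [h]
    · intro i j hij
      exact hinj (Set.image_injective.mpr σ.injective hij)
    · intro i
      obtain ⟨w, hw⟩ := hcomp i
      refine ⟨σ w, ?_⟩
      show σ '' Q i = compSupp G H' (σ w)
      rw [hsuppσ, hw]
    · intro w
      obtain ⟨i, hi⟩ := hsurj (σ w)
      refine ⟨i, ?_⟩
      show σ '' Q i = compSupp G H' w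
      rw [hi, ← hsuppσ, hσσ]
  have hlist : (List.ofFn fun i => (Q i).ncard) = (List.ofFn fun i => (Q' i).ncard) := by
    have h : ∀ i, (Q' i).ncard = (Q i).ncard :=
      fun i => Set.ncard_image_of_injective _ σ.injective
    rw [list_ofFn_three, list_ofFn_three, h 0, h 1, h 2]
  obtain ⟨i0, hi0⟩ := hcover v
  have hi0ne : (i0 : ℕ) ≠ 2 := by
    intro h
    exact hv3 (by rwa [show i0 = 2 from Fin.ext h] at hi0)
  have hvQ'2 : v ∈ Q' 2 := ⟨x, hx, Equiv.swap_apply_right v x⟩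
  have hfinal := hlast H' 3 Q' hlab' hcardH' hlist i0 2 hi0 hvQ'2
  have h2v : ((2 : Fin 3) : ℕ) = 2 := rfl
  have hlt := i0.isLt
  omega
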